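/- Let (D,𝕋) be a trip network with n nodes containing nodes s and t, and let K∈ℕ. Construct (D',𝕋') by adding K new nodes z_1,…,z_K, adding the weight-1 edges (t,z_i) for i∈[K], and letting 𝕋' be 𝕋 together with one one-edge trip for each new edge. If (D,𝕋) is (s,t)-temporalisable, then there exists a temporalisation τ' of (D',𝕋') such that the number of nodes τ'-reachable from s in (D',𝕋') is at least K+2. -/

import Mathlib

/-- A weighted directed edge of a weighted directed multigraph. -/
structure DEdge (V : Type) where
  tail : V
  head : V
  weight : ℝ

/-- A temporal edge: tail, head, starting time and (positive) travel time. -/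
structure TEdge (V : Type) where
  tail : V
  head : V
  time : ℝ
  travel : ℝ

/-- A trip: a nonempty walk, i.e. consecutive edges match head-to-tail. -/
def IsWalk {V : Type} (T : List (DEdge V)) : Prop :=
  T ≠ [] ∧ T.Chain' fun e f => e.head = f.tail

/-- A trip network: every trip is a walk with positive weights, and every node
appears in some trip (the edges of `D` are exactly the edges of the trips). -/
def IsTripNetwork {V : Type} (trips : List (List (DEdge V))) : Prop :=
  (∀ T ∈ trips, IsWalk T ∧ ∀ e ∈ T, 0 < e.weight) ∧
  ∀ v : V, ∃ T ∈ trips, ∃ e ∈ T, e.tail = v ∨ e.head = v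

/-- A temporal path from `u` to `v` in the temporal graph `G`. -/
def IsTemporalPath {V : Type} (G : Set (TEdge V)) (p : List (TEdge V)) (u v : V) : Prop :=
  p ≠ [] ∧ (∀ f ∈ p, f ∈ G) ∧
  (p.Chain' fun e f => e.head = f.tail ∧ e.time + e.travel ≤ f.time) ∧
  p.head?.map TEdge.tail = some u ∧ p.getLast?.map TEdge.head = some v

/-- Temporal reachability (every node temporally reaches itself). -/
def TReachable {V : Type} (G : Set (TEdge V)) (u v : V) : Prop :=
  u = v ∨ ∃ p, IsTemporalPath G p u v

/-- The temporal edges induced by a trip with starting time `t`. -/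
def tripTEdges {V : Type} : List (DEdge V) → ℝ → List (TEdge V)
  | [], _ => []
  | e :: es, t => ⟨e.tail, e.head, t, e.weight⟩ :: tripTEdges es (t + e.weight)

/-- The temporal graph induced by a temporalisation `τ` assigning a starting
time to each trip (index) of the collection. -/
def inducedTG {V : Type} (trips : List (List (DEdge V))) (τ : ℕ → ℝ) : Set (TEdge V) :=
  { f | ∃ i : Fin trips.length, f ∈ tripTEdges (trips.get i) (τ i.1) }

/-- The duration of a trip: the sum of the weights of its edges. -/
def tripDuration {V : Type} (T : List (DEdge V)) : ℝ :=
  (T.map DEdge.weight).sum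

/-- Starting time of the `i`-th trip of a schedule: the sum of the durations of
the previous trips. -/
def scheduleTimes {V : Type} (S : List (List (DEdge V))) (i : ℕ) : ℝ :=
  ((S.take i).map tripDuration).sum

/-- The temporal graph induced by a schedule (an ordering of the trips). -/
def scheduleTG {V : Type} (S : List (List (DEdge V))) : Set (TEdge V) :=
  inducedTG S (scheduleTimes S)

/-- The number of ordered pairs `(u, v)` of nodes such that `v` is temporally
reachable from `u` in `G`. -/
noncomputable def reachCount {V : Type} [Fintype V] (G : Set (TEdge V)) : ℕ :=
  Nat.card {p : V × V // TReachable G p.1 p.2}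

/-- `(s,t)`-temporalisability. -/
def Temporalisable {V : Type} (trips : List (List (DEdge V))) (s t : V) : Prop :=
  ∃ τ : ℕ → ℝ, TReachable (inducedTG trips τ) s t

/-- Strong temporalisability. -/
def StronglyTemporalisable {V : Type} (trips : List (List (DEdge V))) : Prop :=
  ∀ s t : V, Temporalisable trips s t

/-- The sequence of nodes visited by a trip. -/
def tripNodes {V : Type} (T : List (DEdge V)) : List V :=
  T.map DEdge.tail ++ (T.getLast?.map DEdge.head).toList

/-- A symmetric trip collection: the trips can be grouped into disjoint pairs
`(T, T̄)` where `T̄` visits the same nodes as `T` in reverse order. -/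
def IsSymmetricTrips {V : Type} (trips : List (List (DEdge V))) : Prop :=
  ∃ ps : List (List (DEdge V) × List (DEdge V)),
    trips.Perm (ps.flatMap fun p => [p.1, p.2]) ∧
    ∀ p ∈ ps, tripNodes p.2 = (tripNodes p.1).reverse

/-- Reachability by a walk in the underlying multidigraph. -/
def DReachable {V : Type} (trips : List (List (DEdge V))) (u v : V) : Prop :=
  Relation.ReflTransGen (fun a b => ∃ T ∈ trips, ∃ e ∈ T, e.tail = a ∧ e.head = b) u v

/-- Relabel the endpoints of an edge. -/
def liftEdge {V W : Type} (φ : V → W) (e : DEdge V) : DEdge W :=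
  ⟨φ e.tail, φ e.head, e.weight⟩

/-- The extended trip network of the gap reduction for `SS-MRTT`: `K` new nodes
`z_1, …, z_K` are added, together with the weight-1 edges `(t, z_i)` and the
corresponding one-edge trips. -/
def extTripsSS {V : Type} (trips : List (List (DEdge V))) (K : ℕ) (t : V) :
    List (List (DEdge (V ⊕ Fin K))) :=
  trips.map (List.map (liftEdge Sum.inl))
    ++ ((List.finRange K).map fun i =>
        [(⟨Sum.inl t, Sum.inr i, 1⟩ : DEdge (V ⊕ Fin K))])


section Aux

/-- Relabel the endpoints of a temporal edge. -/
def liftTEdge {V W : Type} (φ : V → W) (e : TEdge V) : TEdge W :=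
  ⟨φ e.tail, φ e.head, e.time, e.travel⟩

lemma tripTEdges_map {V W : Type} (φ : V → W) (T : List (DEdge V)) (t : ℝ) :
    tripTEdges (T.map (liftEdge φ)) t = (tripTEdges T t).map (liftTEdge φ) := by
  induction T generalizing t with
  | nil => simp [tripTEdges]
  | cons e es ih => simp [tripTEdges, liftEdge, liftTEdge, ih]

lemma mem_ext_lift {V : Type} (trips : List (List (DEdge V))) (K : ℕ) (t : V)
    (τ τ' : ℕ → ℝ) (hτ : ∀ i < trips.length, τ' i = τ i) (f : TEdge V)
    (hf : f ∈ inducedTG trips τ) :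
    liftTEdge Sum.inl f ∈ inducedTG (extTripsSS trips K t) τ' := by
  obtain ⟨i, hi⟩ := hf
  have hlen : (extTripsSS trips K t).length = trips.length + K := by
    simp [extTripsSS]
  have hi1 : i.1 < trips.length := i.2
  refine ⟨⟨i.1, by omega⟩, ?_⟩
  have hget : (extTripsSS trips K t).get ⟨i.1, by omega⟩
      = (trips.get i).map (liftEdge Sum.inl) := by
    have h1 : i.1 < (trips.map (List.map (liftEdge (Sum.inl : V → V ⊕ Fin K)))).length := by
      simpa using hi1
    rw [show (extTripsSS trips K t).get ⟨i.1, by omega⟩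
        = (extTripsSS trips K t)[i.1] from rfl]
    simp only [extTripsSS]
    rw [List.getElem_append_left h1]
    simp
  rw [hget, hτ i.1 hi1, tripTEdges_map]
  exact List.mem_map_of_mem hi

lemma mem_ext_extra {V : Type} (trips : List (List (DEdge V))) (K : ℕ) (t : V)
    (τ' : ℕ → ℝ) (i : Fin K) :
    (⟨Sum.inl t, Sum.inr i, τ' (trips.length + i.1), 1⟩ : TEdge (V ⊕ Fin K))
      ∈ inducedTG (extTripsSS trips K t) τ' := by
  have hlen : (extTripsSS trips K t).length = trips.length + K := by
    simp [extTripsSS]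
  refine ⟨⟨trips.length + i.1, by omega⟩, ?_⟩
  have hget : (extTripsSS trips K t).get ⟨trips.length + i.1, by omega⟩
      = [(⟨Sum.inl t, Sum.inr i, 1⟩ : DEdge (V ⊕ Fin K))] := by
    rw [show (extTripsSS trips K t).get ⟨trips.length + i.1, by omega⟩
        = (extTripsSS trips K t)[trips.length + i.1] from rfl]
    simp only [extTripsSS]
    rw [List.getElem_append_right (by simp)]
    simp
  rw [hget]
  simp [tripTEdges]

end Aux

/-- If `(D,𝕋)` is `(s,t)`-temporalisable then in the extended
trip network some temporalisation makes at least `K + 2` nodes reachable from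
`s`. -/
theorem extended_single_source_of_temporalisable
    {V : Type} [Fintype V] (trips : List (List (DEdge V)))
    (hN : IsTripNetwork trips) (s t : V) (hst : s ≠ t) (K : ℕ)
    (h : Temporalisable trips s t) :
    ∃ τ' : ℕ → ℝ,
      K + 2 ≤ Nat.card {v : V ⊕ Fin K //
        TReachable (inducedTG (extTripsSS trips K t) τ') (Sum.inl s) v} := by
  classical
  obtain ⟨τ, hτ⟩ := h
  rcases hτ with rfl | ⟨p, hp⟩
  · exact absurd rfl hst
  obtain ⟨hpne, hpG, hpchain, hphead, hplast⟩ := hp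
  -- the arrival time at t
  set eL := p.getLast hpne with heL
  set M : ℝ := eL.time + eL.travel with hM
  set τ' : ℕ → ℝ := fun i => if i < trips.length then τ i else M with hτ'
  have hagree : ∀ i < trips.length, τ' i = τ i := fun i hi => if_pos hi
  refine ⟨τ', ?_⟩
  set G := inducedTG (extTripsSS trips K t) τ' with hG
  set q : List (TEdge (V ⊕ Fin K)) := p.map (liftTEdge Sum.inl) with hq
  have hqne : q ≠ [] := by simp [hq, hpne]
  have hqG : ∀ f ∈ q, f ∈ G := by
    intro f hf
    obtain ⟨e, he, rfl⟩ := List.mem_map.mp hf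
    exact mem_ext_lift trips K t τ τ' hagree e (hpG e he)
  have hqchain : q.Chain' fun e f => e.head = f.tail ∧ e.time + e.travel ≤ f.time := by
    rw [hq]; show List.IsChain _ _; rw [List.isChain_map]
    exact hpchain.imp (fun {a b} hab => ⟨by simp [liftTEdge, hab.1], by simpa [liftTEdge] using hab.2⟩)
  have hqhead : q.head?.map TEdge.tail = some (Sum.inl s) := by
    rcases p with _ | ⟨e, es⟩
    · exact absurd rfl hpne
    · simp only [List.head?] at hphead
      simp [hq, liftTEdge]
      simpa using hphead
  have hqlastmem : q.getLast hqne = liftTEdge Sum.inl eL := by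
    simp [hq, heL, List.getLast_map]
  have hqlast : q.getLast?.map TEdge.head = some (Sum.inl t) := by
    rw [List.getLast?_eq_getLast hqne, hqlastmem]
    have : eL.head = t := by
      rw [List.getLast?_eq_getLast hpne] at hplast
      simpa [heL] using hplast
    simp [liftTEdge, this]
  have hreach_t : TReachable G (Sum.inl s) (Sum.inl t) :=
    Or.inr ⟨q, hqne, hqG, hqchain, hqhead, hqlast⟩
  have hreach_z : ∀ i : Fin K, TReachable G (Sum.inl s) (Sum.inr i) := by
    intro i
    set f : TEdge (V ⊕ Fin K) := ⟨Sum.inl t, Sum.inr i, τ' (trips.length + i.1), 1⟩ with hfdef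
    have hfG : f ∈ G := mem_ext_extra trips K t τ' i
    have hftime : τ' (trips.length + i.1) = M := if_neg (by omega)
    refine Or.inr ⟨q ++ [f], by simp, ?_, ?_, ?_, ?_⟩
    · intro g hg
      rcases List.mem_append.mp hg with hg | hg
      · exact hqG g hg
      · simp only [List.mem_singleton] at hg
        subst hg; exact hfG
    · show List.IsChain _ _; rw [List.isChain_append]
      refine ⟨hqchain, List.isChain_singleton f, ?_⟩
      intro x hx y hy
      rw [List.getLast?_eq_getLast hqne, hqlastmem] at hx
      simp at hy
      cases hx; cases hy
      have : eL.head = t := by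
        rw [List.getLast?_eq_getLast hpne] at hplast
        simpa [heL] using hplast
      constructor
      · simp [liftTEdge, hfdef, this]
      · simp [liftTEdge, hfdef, hftime, hM]
    · rw [List.head?_append_of_ne_nil _ hqne]
      exact hqhead
    · simp [hfdef]
  -- counting
  set P : V ⊕ Fin K → Prop := fun v => TReachable G (Sum.inl s) v with hP
  have hPs : P (Sum.inl s) := Or.inl rfl
  have hPt : P (Sum.inl t) := hreach_t
  have hPz : ∀ i : Fin K, P (Sum.inr i) := hreach_z
  have hcard : Nat.card {v : V ⊕ Fin K // P v} = (Finset.univ.filter P).card := by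
    rw [Nat.card_eq_fintype_card, Fintype.card_subtype]
  rw [hcard]
  set S : Finset (V ⊕ Fin K) :=
    insert (Sum.inl s) (insert (Sum.inl t) (Finset.univ.image (Sum.inr : Fin K → V ⊕ Fin K)))
    with hS
  have hSsub : S ⊆ Finset.univ.filter P := by
    intro v hv
    simp only [hS, Finset.mem_insert, Finset.mem_image] at hv
    rcases hv with rfl | rfl | ⟨i, _, rfl⟩
    · exact Finset.mem_filter.mpr ⟨Finset.mem_univ _, hPs⟩
    · exact Finset.mem_filter.mpr ⟨Finset.mem_univ _, hPt⟩
    · exact Finset.mem_filter.mpr ⟨Finset.mem_univ _, hPz i⟩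
  have hScard : S.card = K + 2 := by
    rw [hS, Finset.card_insert_of_notMem, Finset.card_insert_of_notMem]
    · rw [Finset.card_image_of_injective _ Sum.inr_injective]
      simp
      try ring
    · simp
    · simp [hst]
  calc K + 2 = S.card := hScard.symm
    _ ≤ _ := Finset.card_le_card hSsub
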